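/- arXiv:1805.09396 — 12 statements merged into one kernel-verified Lean document; each statement's English description precedes it below -/
import Mathlib

section
/- If A is μ-strongly monotone and (1/β)-cocoercive with β ≥ μ > 0, then the reflected resolvent R_A is κ-Lipschitz on its graph with κ = ((1 − 2μ + μβ)/(1 + 2μ + μβ))^{1/2}; i.e., for all (x,u),(y,v) in gra R_A, ‖u−v‖² ≤ κ²‖x−y‖². -/
open InnerProductSpace

theorem stmt_3 {X : Type*} [NormedAddCommGroup X] [InnerProductSpace ℝ X]
    (S : Set (X × X)) (μ β : ℝ) (hμ : 0 < μ) (hβμ : μ ≤ β)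
    (hstrong : ∀ x u y v : X, (x, u) ∈ S → (y, v) ∈ S →
        ⟪x - y, u - v⟫_ℝ ≥ μ * ‖x - y‖ ^ 2)
    (hcoco : ∀ x u y v : X, (x, u) ∈ S → (y, v) ∈ S →
        ⟪x - y, u - v⟫_ℝ ≥ (1 / β) * ‖u - v‖ ^ 2) :
    ∀ x u y v : X, (x, u) ∈ S → (y, v) ∈ S →
      ‖(x - u) - (y - v)‖ ^ 2 ≤
        (Real.sqrt ((1 - 2 * μ + μ * β) / (1 + 2 * μ + μ * β))) ^ 2 *
          ‖(x + u) - (y + v)‖ ^ 2 := by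
  intro x u y v hxu hyv
  have hβ : 0 < β := lt_of_lt_of_le hμ hβμ
  have hnum : 0 ≤ 1 - 2 * μ + μ * β := by nlinarith [sq_nonneg (1 - μ)]
  have hden : 0 < 1 + 2 * μ + μ * β := by positivity
  rw [Real.sq_sqrt (div_nonneg hnum hden.le)]
  have h1 := hstrong x u y v hxu hyv
  have h2 := hcoco x u y v hxu hyv
  have e1 : ‖(x - u) - (y - v)‖ ^ 2
      = ‖x - y‖ ^ 2 - 2 * ⟪x - y, u - v⟫_ℝ + ‖u - v‖ ^ 2 := by
    have : (x - u) - (y - v) = (x - y) - (u - v) := by abel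
    rw [this, norm_sub_sq_real]
  have e2 : ‖(x + u) - (y + v)‖ ^ 2
      = ‖x - y‖ ^ 2 + 2 * ⟪x - y, u - v⟫_ℝ + ‖u - v‖ ^ 2 := by
    have : (x + u) - (y + v) = (x - y) + (u - v) := by abel
    rw [this, norm_add_sq_real]
  rw [e1, e2, div_mul_eq_mul_div, le_div_iff₀ hden]
  have h2' : ‖u - v‖ ^ 2 ≤ β * ⟪x - y, u - v⟫_ℝ := by
    rw [ge_iff_le, div_mul_eq_mul_div, div_le_iff₀ hβ] at h2
    linarith
  nlinarith [mul_le_mul_of_nonneg_left h1.le (le_of_lt hμ)]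
end

section
/- If A is μ-strongly monotone and β-Lipschitz continuous with β ≥ μ > 0, then R_A = 2(Id+A)⁻¹ − Id is κ-Lipschitz with κ = ((1 − 2μ + β²)/(1 + 2μ + β²))^{1/2}; i.e., for all (x,u),(y,v) in the graph of R_A, ‖u−v‖² ≤ κ²‖x−y‖². -/
open InnerProductSpace

theorem stmt_4 {X : Type*} [NormedAddCommGroup X] [InnerProductSpace ℝ X]
    (A : X → X) (μ β : ℝ) (hμ : 0 < μ) (hβμ : μ ≤ β)
    (hstrong : ∀ x y : X, ⟪x - y, A x - A y⟫_ℝ ≥ μ * ‖x - y‖ ^ 2)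
    (hlip : ∀ x y : X, ‖A x - A y‖ ≤ β * ‖x - y‖) :
    ∀ x y : X,
      ‖(x - A x) - (y - A y)‖ ^ 2 ≤
        (Real.sqrt ((1 - 2 * μ + β ^ 2) / (1 + 2 * μ + β ^ 2))) ^ 2 *
          ‖(x + A x) - (y + A y)‖ ^ 2 := by
  intro x y
  set w := x - y with hw
  set a := A x - A y with ha
  have hnum : (0:ℝ) ≤ 1 - 2 * μ + β ^ 2 := by nlinarith [sq_nonneg (β - 1)]
  have hden : (0:ℝ) < 1 + 2 * μ + β ^ 2 := by nlinarith [sq_nonneg β]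
  have hsq : (Real.sqrt ((1 - 2 * μ + β ^ 2) / (1 + 2 * μ + β ^ 2))) ^ 2
      = (1 - 2 * μ + β ^ 2) / (1 + 2 * μ + β ^ 2) :=
    Real.sq_sqrt (div_nonneg hnum hden.le)
  have h1 : (x - A x) - (y - A y) = w - a := by rw [hw, ha]; abel
  have h2 : (x + A x) - (y + A y) = w + a := by rw [hw, ha]; abel
  rw [h1, h2, hsq, div_mul_eq_mul_div, le_div_iff₀ hden]
  have e1 : ‖w - a‖ ^ 2 = ‖w‖ ^ 2 - 2 * ⟪w, a⟫_ℝ + ‖a‖ ^ 2 := by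
    rw [@norm_sub_sq_real]
  have e2 : ‖w + a‖ ^ 2 = ‖w‖ ^ 2 + 2 * ⟪w, a⟫_ℝ + ‖a‖ ^ 2 := by
    rw [@norm_add_sq_real]
  have hs := hstrong x y
  have hl := hlip x y
  have hl2 : ‖a‖ ^ 2 ≤ β ^ 2 * ‖w‖ ^ 2 := by
    have := mul_self_le_mul_self (norm_nonneg a) hl
    nlinarith
  rw [e1, e2]
  nlinarith [norm_nonneg w, sq_nonneg ‖w‖, mul_le_mul_of_nonneg_left hl2 hμ.le,
    mul_le_mul_of_nonneg_left hs (by nlinarith [sq_nonneg β] : (0:ℝ) ≤ 1 + β ^ 2)]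
end

section
/- If A is μ-strongly monotone and α-averaged with 0 < μ < 1 and 0 < α < 1, then R_A is κ-Lipschitz on its graph with κ = (α(1−μ)/(α(1−μ)+2μ))^{1/2}. -/
open InnerProductSpace

theorem stmt_5 {X : Type*} [NormedAddCommGroup X] [InnerProductSpace ℝ X]
    (A : X → X) (μ α : ℝ) (hμ0 : 0 < μ) (hμ1 : μ < 1) (hα0 : 0 < α) (hα1 : α < 1)
    (hstrong : ∀ x y : X, ⟪x - y, A x - A y⟫_ℝ ≥ μ * ‖x - y‖ ^ 2)
    (havg : ∀ x y : X,
      (2 * α - 1) * ‖x - y‖ ^ 2 + 2 * (1 - α) * ⟪x - y, A x - A y⟫_ℝ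
        - ‖A x - A y‖ ^ 2 ≥ 0) :
    ∀ x y : X,
      ‖(x - A x) - (y - A y)‖ ^ 2 ≤
        (Real.sqrt ((α * (1 - μ)) / (α * (1 - μ) + 2 * μ))) ^ 2 *
          ‖(x + A x) - (y + A y)‖ ^ 2 := by
  intro x y
  have hs := hstrong x y
  have ha := havg x y
  have hD : 0 < α * (1 - μ) + 2 * μ := by nlinarith
  have hc : 0 ≤ (α * (1 - μ)) / (α * (1 - μ) + 2 * μ) := by
    apply div_nonneg <;> nlinarith
  rw [Real.sq_sqrt hc]
  have e1 : (x - A x) - (y - A y) = (x - y) - (A x - A y) := by abel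
  have e2 : (x + A x) - (y + A y) = (x - y) + (A x - A y) := by abel
  rw [e1, e2, div_mul_eq_mul_div, le_div_iff₀ hD]
  rw [norm_sub_sq_real, norm_add_sq_real]
  nlinarith [hs, ha, sq_nonneg ‖x - y‖, sq_nonneg ‖A x - A y‖,
    mul_nonneg hμ0.le (sq_nonneg ‖x - y‖),
    mul_le_mul_of_nonneg_left hs hα0.le,
    mul_le_mul_of_nonneg_left ha hμ0.le]
end

section
/- If A : X → X is monotone and β-Lipschitz continuous with β > 0, then Id − J_A is a Banach contraction with constant β/√(1+β²); equivalently, for all u, v ∈ X, ‖Au − Av‖² ≤ (β²/(1+β²)) ‖(u+Au) − (v+Av)‖². -/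
open InnerProductSpace

theorem stmt_7 {X : Type*} [NormedAddCommGroup X] [InnerProductSpace ℝ X]
    (A : X → X) (β : ℝ) (hβ : 0 < β)
    (hmono : ∀ x y : X, ⟪x - y, A x - A y⟫_ℝ ≥ 0)
    (hlip : ∀ x y : X, ‖A x - A y‖ ≤ β * ‖x - y‖) :
    ∀ u v : X, ‖A u - A v‖ ^ 2 ≤
      (β ^ 2 / (1 + β ^ 2)) * ‖(u + A u) - (v + A v)‖ ^ 2 := by
  intro u v
  have hd : (u + A u) - (v + A v) = (u - v) + (A u - A v) := by abel
  rw [hd, norm_add_sq_real]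
  have h1 := hmono u v
  have h2 := hlip u v
  have h3 : ‖A u - A v‖ ^ 2 ≤ β ^ 2 * ‖u - v‖ ^ 2 := by
    nlinarith [norm_nonneg (A u - A v), norm_nonneg (u - v)]
  have hpos : (0:ℝ) < 1 + β ^ 2 := by positivity
  rw [div_mul_eq_mul_div, le_div_iff₀ hpos]
  nlinarith [norm_nonneg (u - v), norm_nonneg (A u - A v)]
end

section
/- If A : X → X is monotone and β-Lipschitz continuous with β > 0, then J_A is (1/(2(1+β)²) + 1/(2(1+β²)))-strongly monotone; equivalently, for all u, v ∈ X, ⟨(u+Au)−(v+Av), u−v⟩ ≥ (1/(2(1+β)²) + 1/(2(1+β²))) ‖(u+Au)−(v+Av)‖². -/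
open InnerProductSpace

theorem stmt_8 {X : Type*} [NormedAddCommGroup X] [InnerProductSpace ℝ X]
    (A : X → X) (β : ℝ) (hβ : 0 < β)
    (hmono : ∀ x y : X, ⟪x - y, A x - A y⟫_ℝ ≥ 0)
    (hlip : ∀ x y : X, ‖A x - A y‖ ≤ β * ‖x - y‖) :
    ∀ u v : X,
      ⟪(u + A u) - (v + A v), u - v⟫_ℝ ≥
        (1 / (2 * (1 + β) ^ 2) + 1 / (2 * (1 + β ^ 2))) *
          ‖(u + A u) - (v + A v)‖ ^ 2 := by
  intro u v
  have key : (u + A u) - (v + A v) = (u - v) + (A u - A v) := by abel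
  rw [key]
  set d := u - v with hd
  set e := A u - A v with he
  have hp : (0:ℝ) ≤ ⟪d, e⟫_ℝ := hmono u v
  have hce : ‖e‖ ≤ β * ‖d‖ := hlip u v
  have hcs : ⟪d, e⟫_ℝ ≤ ‖d‖ * ‖e‖ := real_inner_le_norm d e
  have hnorm : ‖d + e‖ ^ 2 = ‖d‖^2 + 2*⟪d,e⟫_ℝ + ‖e‖^2 := norm_add_sq_real d e
  have hinner : ⟪d + e, d⟫_ℝ = ‖d‖^2 + ⟪d,e⟫_ℝ := by
    rw [inner_add_left, real_inner_self_eq_norm_sq, real_inner_comm]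
  rw [hinner, hnorm]
  have h1 : (0:ℝ) < 2 * (1 + β) ^ 2 := by positivity
  have h2 : (0:ℝ) < 2 * (1 + β ^ 2) := by positivity
  rw [ge_iff_le, div_add_div _ _ (ne_of_gt h1) (ne_of_gt h2), div_mul_eq_mul_div,
    div_le_iff₀ (by positivity)]
  set a := ‖d‖
  set b := ‖e‖
  set p := ⟪d,e⟫_ℝ
  have ha : (0:ℝ) ≤ a := norm_nonneg d
  have hb : (0:ℝ) ≤ b := norm_nonneg e
  have hb2 : b^2 ≤ β^2 * a^2 := by nlinarith [mul_self_le_mul_self hb hce]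
  have hpb : p ≤ β * a^2 := by nlinarith [mul_le_mul_of_nonneg_left hce ha]
  rcases le_or_gt 0 (2*β^3 + β^4 - 1) with h | h
  · nlinarith [mul_nonneg h hp, mul_nonneg hβ.le (sq_nonneg a),
      mul_nonneg (mul_nonneg (mul_nonneg hβ.le hβ.le) hβ.le) (sq_nonneg a),
      mul_nonneg (mul_nonneg hβ.le hβ.le) (sub_nonneg.2 hb2),
      mul_nonneg hβ.le (sub_nonneg.2 hb2), sub_nonneg.2 hb2]
  · nlinarith [mul_nonneg (by linarith : (0:ℝ) ≤ 1 - 2*β^3 - β^4) (sub_nonneg.2 hpb),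
      mul_nonneg (mul_nonneg (mul_nonneg hβ.le hβ.le) hβ.le) (sq_nonneg a),
      mul_nonneg (mul_nonneg (mul_nonneg (mul_nonneg hβ.le hβ.le) hβ.le) hβ.le) (sq_nonneg a),
      mul_nonneg (mul_nonneg (mul_nonneg (mul_nonneg (mul_nonneg hβ.le hβ.le) hβ.le) hβ.le) hβ.le) (sq_nonneg a),
      mul_nonneg (mul_nonneg hβ.le hβ.le) (sub_nonneg.2 hb2),
      mul_nonneg hβ.le (sub_nonneg.2 hb2), sub_nonneg.2 hb2]
end

section
/- If A : X → X is monotone and β-Lipschitz continuous with β > 0, then the reflected resolvent R_A = 2J_A − Id satisfies ⟨x − y, R_A x − R_A y⟩ ≥ −λ‖x−y‖² for all x, y, where λ = 1 − 1/(1+β)² − 1/(1+β²) ∈ (−1, 1). Equivalently, for all u, v ∈ X, ⟨(u+Au)−(v+Av), (u−Au)−(v−Av)⟩ ≥ −λ‖(u+Au)−(v+Av)‖². -/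
open InnerProductSpace

lemma key_stmt9 (β s t p : ℝ) (hβ : 0 < β) (hs : 0 ≤ s) (ht : 0 ≤ t)
    (hp0 : 0 ≤ p) (hpst : p ≤ s * t) (htβ : t ≤ β * s) :
    s ^ 2 - t ^ 2 ≥ -(1 - 1 / (1 + β) ^ 2 - 1 / (1 + β ^ 2)) * (s ^ 2 + 2 * p + t ^ 2) := by
  have hc : (0:ℝ) < (1 + β) ^ 2 := by positivity
  have hd : (0:ℝ) < 1 + β ^ 2 := by positivity
  set c := (1 + β) ^ 2 with hcdef
  set d := 1 + β ^ 2 with hddef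
  rw [ge_iff_le, ← sub_nonneg]
  have hA : c + d ≤ 2 * (c * d) := by nlinarith [sq_nonneg β, sq_nonneg (β - 1), sq_nonneg (β + 1)]
  have key : 0 ≤ ((2*(c*d) - c - d) * s^2 + 2*(c*d - c - d) * p - (c + d) * t^2) := by
    rcases le_or_gt (c + d) (c*d) with h | h
    · have hkey1 : 2*(c*d) - c - d = β^2*(c+d) + 2*β*d := by rw [hcdef, hddef]; ring
      nlinarith [mul_nonneg (mul_nonneg (add_pos hc hd).le ht) (sub_nonneg.2 htβ),
        mul_nonneg (mul_nonneg (add_pos hc hd).le (mul_nonneg hβ.le hs)) (sub_nonneg.2 htβ),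
        mul_nonneg (mul_nonneg (mul_nonneg hβ.le hd.le) hs) hs,
        mul_nonneg (sub_nonneg.2 h) hp0]
    · have hg : 0 ≤ (2*(c*d) - c - d) * s^2 + 2*(c*d - c - d) * (s*t) - (c + d) * t^2 := by
        rcases eq_or_lt_of_le hs with hs0 | hs0
        · have ht0 : t = 0 := le_antisymm (by nlinarith) ht
          rw [← hs0, ht0]; ring_nf; rfl
        · have h9 : 0 ≤ (β*s) * ((2*(c*d) - c - d) * s^2 + 2*(c*d - c - d) * (s*t) - (c + d) * t^2) := by
            have hid : (β*s) * ((2*(c*d) - c - d) * s^2 + 2*(c*d - c - d) * (s*t) - (c + d) * t^2)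
                = (β*s - t) * ((2*(c*d) - c - d) * s^2) + t * (2*β^3*c*s^2)
                  + (c + d) * β * s * t * (β*s - t) := by
              rw [hcdef, hddef]; ring
            rw [hid]
            have h1 : 0 ≤ (β*s - t) * ((2*(c*d) - c - d) * s^2) := by
              apply mul_nonneg (by linarith)
              apply mul_nonneg (by linarith) (sq_nonneg s)
            have h2 : 0 ≤ t * (2*β^3*c*s^2) := by positivity
            have h3 : 0 ≤ (c + d) * β * s * t * (β*s - t) := by
              apply mul_nonneg _ (by linarith)
              positivity
            linarith
          have hβs : 0 < β * s := by positivity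
          exact nonneg_of_mul_nonneg_right h9 hβs
      nlinarith [mul_nonneg (sub_nonneg.2 hpst) (sub_nonneg.2 (le_of_lt h))]
  have h2 : s ^ 2 - t ^ 2 - -(1 - 1 / c - 1 / d) * (s ^ 2 + 2 * p + t ^ 2)
      = ((2*(c*d) - c - d) * s^2 + 2*(c*d - c - d) * p - (c + d) * t^2) / (c * d) := by
    field_simp
    ring
  rw [h2]
  positivity

theorem stmt_9 {X : Type*} [NormedAddCommGroup X] [InnerProductSpace ℝ X]
    (A : X → X) (β : ℝ) (hβ : 0 < β)
    (hmono : ∀ x y : X, ⟪x - y, A x - A y⟫_ℝ ≥ 0)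
    (hlip : ∀ x y : X, ‖A x - A y‖ ≤ β * ‖x - y‖) :
    (-1 < 1 - 1 / (1 + β) ^ 2 - 1 / (1 + β ^ 2) ∧
      1 - 1 / (1 + β) ^ 2 - 1 / (1 + β ^ 2) < 1) ∧
    ∀ u v : X,
      ⟪(u + A u) - (v + A v), (u - A u) - (v - A v)⟫_ℝ ≥
        -(1 - 1 / (1 + β) ^ 2 - 1 / (1 + β ^ 2)) *
          ‖(u + A u) - (v + A v)‖ ^ 2 := by
  have hc : (0:ℝ) < (1 + β) ^ 2 := by positivity
  have hd : (0:ℝ) < 1 + β ^ 2 := by positivity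
  constructor
  · constructor
    · have h1 : 1 / (1 + β) ^ 2 < 1 := by
        rw [div_lt_one hc]; nlinarith
      have h2 : 1 / (1 + β ^ 2) < 1 := by
        rw [div_lt_one hd]; nlinarith
      linarith
    · have h1 : 0 < 1 / (1 + β) ^ 2 := by positivity
      have h2 : 0 < 1 / (1 + β ^ 2) := by positivity
      linarith
  · intro u v
    set a := u - v with ha
    set b := A u - A v with hb
    have e1 : (u + A u) - (v + A v) = a + b := by rw [ha, hb]; abel
    have e2 : (u - A u) - (v - A v) = a - b := by rw [ha, hb]; abel
    rw [e1, e2]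
    have hinn : ⟪a + b, a - b⟫_ℝ = ‖a‖ ^ 2 - ‖b‖ ^ 2 := by
      rw [inner_sub_right, inner_add_left, inner_add_left,
        real_inner_self_eq_norm_sq, real_inner_self_eq_norm_sq, real_inner_comm b a]
      ring
    have hnorm : ‖a + b‖ ^ 2 = ‖a‖ ^ 2 + 2 * ⟪a, b⟫_ℝ + ‖b‖ ^ 2 := norm_add_sq_real a b
    rw [hinn, hnorm]
    exact key_stmt9 β ‖a‖ ‖b‖ ⟪a, b⟫_ℝ hβ (norm_nonneg a) (norm_nonneg b)
      (hmono u v) (real_inner_le_norm a b) (hlip u v)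
end

section
/- Let T₁, T₂ : X → X be nonexpansive and T = (1/2)(Id + T₂T₁). Then −T₂T₁ is α-averaged (i.e., −T₂T₁ = (1−α)Id + αN with N nonexpansive) if and only if T is (1/α)-cocoercive. -/
open InnerProductSpace

lemma key_11 {X : Type*} [NormedAddCommGroup X] [InnerProductSpace ℝ X]
    (α : ℝ) (hα0 : 0 < α) (d s : X) :
    ‖s + (1 - α) • d‖ ≤ α * ‖d‖ ↔
      ⟪d, (1 / 2 : ℝ) • (d + s)⟫_ℝ ≥ (1 / α) * ‖(1 / 2 : ℝ) • (d + s)‖ ^ 2 := by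
  have hsq : ‖s + (1 - α) • d‖ ≤ α * ‖d‖ ↔
      ‖s + (1 - α) • d‖ ^ 2 ≤ (α * ‖d‖) ^ 2 :=
    (pow_le_pow_iff_left₀ (norm_nonneg _) (by positivity) (by norm_num)).symm
  rw [hsq]
  have e1 : ‖s + (1 - α) • d‖ ^ 2 =
      ‖s‖ ^ 2 + 2 * ((1 - α) * ⟪s, d⟫_ℝ) + (1 - α) ^ 2 * ‖d‖ ^ 2 := by
    rw [norm_add_sq_real, real_inner_smul_right, norm_smul]
    rw [Real.norm_eq_abs, mul_pow, sq_abs]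
  have e2 : ⟪d, (1 / 2 : ℝ) • (d + s)⟫_ℝ = (1 / 2) * (‖d‖ ^ 2 + ⟪d, s⟫_ℝ) := by
    rw [real_inner_smul_right, inner_add_right, real_inner_self_eq_norm_sq]
  have e3 : ‖(1 / 2 : ℝ) • (d + s)‖ ^ 2 =
      (1 / 4) * (‖d‖ ^ 2 + 2 * ⟪d, s⟫_ℝ + ‖s‖ ^ 2) := by
    rw [norm_smul, Real.norm_eq_abs, mul_pow, sq_abs, norm_add_sq_real]
    ring
  have hsym : ⟪s, d⟫_ℝ = ⟪d, s⟫_ℝ := real_inner_comm d s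
  rw [e1, e2, e3, hsym]
  have hα := hα0.ne'
  constructor
  · intro h
    rw [ge_iff_le, div_mul_eq_mul_div, div_le_iff₀ hα0]
    nlinarith
  · intro h
    rw [ge_iff_le, div_mul_eq_mul_div, div_le_iff₀ hα0] at h
    nlinarith

theorem stmt_11 {X : Type*} [NormedAddCommGroup X] [InnerProductSpace ℝ X]
    (T₁ T₂ : X → X) (α : ℝ) (hα0 : 0 < α) (hα1 : α < 1)
    (h₁ : ∀ x y : X, ‖T₁ x - T₁ y‖ ≤ ‖x - y‖)
    (h₂ : ∀ x y : X, ‖T₂ x - T₂ y‖ ≤ ‖x - y‖)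
    (T : X → X) (hT : ∀ x : X, T x = (1 / 2 : ℝ) • (x + T₂ (T₁ x))) :
    (∃ N : X → X, (∀ x y : X, ‖N x - N y‖ ≤ ‖x - y‖) ∧
        ∀ x : X, -(T₂ (T₁ x)) = (1 - α) • x + α • N x) ↔
      (∀ x y : X, ⟪x - y, T x - T y⟫_ℝ ≥ (1 / α) * ‖T x - T y‖ ^ 2) := by
  set S : X → X := fun x => T₂ (T₁ x) with hS
  have hTdiff : ∀ x y : X, T x - T y = (1 / 2 : ℝ) • ((x - y) + (S x - S y)) := by
    intro x y
    rw [hT x, hT y, ← smul_sub]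
    congr 1
    abel
  constructor
  · rintro ⟨N, hNne, hNEq⟩ x y
    have hd : (S x - S y) + (1 - α) • (x - y) = -(α • (N x - N y)) := by
      have hx := hNEq x
      have hy := hNEq y
      have : -(S x) - -(S y) = ((1 - α) • x + α • N x) - ((1 - α) • y + α • N y) := by
        rw [← hx, ← hy]
      rw [smul_sub, smul_sub]
      have : S x - S y = (1 - α) • y - (1 - α) • x + (α • N y - α • N x) := by
        have h2 : S y - S x = ((1 - α) • x + α • N x) - ((1 - α) • y + α • N y) := by
          rw [← hx, ← hy]; abel
        have h3 : S x - S y = ((1 - α) • y + α • N y) - ((1 - α) • x + α • N x) := by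
          rw [← hx, ← hy]; abel
        rw [h3]; abel
      rw [this]; abel
    have hnorm : ‖(S x - S y) + (1 - α) • (x - y)‖ ≤ α * ‖x - y‖ := by
      rw [hd, norm_neg, norm_smul, Real.norm_eq_abs, abs_of_pos hα0]
      exact mul_le_mul_of_nonneg_left (hNne x y) hα0.le
    have := (key_11 α hα0 (x - y) (S x - S y)).mp hnorm
    rwa [hTdiff x y]
  · intro hco
    refine ⟨fun x => α⁻¹ • (-(S x) - (1 - α) • x), ?_, ?_⟩
    · intro x y
      have hc := hco x y
      rw [hTdiff x y] at hc
      have hnorm := (key_11 α hα0 (x - y) (S x - S y)).mpr hc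
      have e : α⁻¹ • (-(S x) - (1 - α) • x) - α⁻¹ • (-(S y) - (1 - α) • y) =
          -(α⁻¹ • ((S x - S y) + (1 - α) • (x - y))) := by
        rw [← smul_sub, ← smul_neg]
        congr 1
        rw [smul_sub]
        abel
      rw [e, norm_neg, norm_smul, Real.norm_eq_abs, abs_of_pos (inv_pos.mpr hα0)]
      calc α⁻¹ * ‖(S x - S y) + (1 - α) • (x - y)‖ ≤ α⁻¹ * (α * ‖x - y‖) :=
            mul_le_mul_of_nonneg_left hnorm (inv_pos.mpr hα0).le
        _ = ‖x - y‖ := by field_simp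
    · intro x
      rw [smul_smul, mul_inv_cancel₀ hα0.ne', one_smul]
      abel
end

section
/- Let R : X → X be such that −R is α-averaged with α ∈ [0,1), and let M : X → X be nonexpansive with ⟨x−y, Mx−My⟩ ≥ −λ‖x−y‖² for all x,y, where λ ∈ [−1,1). Then Id + (α−1)M is Lipschitz continuous with constant √(1 + (1−α)² + 2λ(1−α)), and this constant is strictly less than 2 − α. -/
open InnerProductSpace

theorem stmt_12 {X : Type*} [NormedAddCommGroup X] [InnerProductSpace ℝ X]
    (R M : X → X) (α lam : ℝ) (hα0 : 0 ≤ α) (hα1 : α < 1)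
    (hlam0 : -1 ≤ lam) (hlam1 : lam < 1)
    (hR : ∃ N : X → X, (∀ x y : X, ‖N x - N y‖ ≤ ‖x - y‖) ∧
        ∀ x : X, -(R x) = (1 - α) • x + α • N x)
    (hMne : ∀ x y : X, ‖M x - M y‖ ≤ ‖x - y‖)
    (hM : ∀ x y : X, ⟪x - y, M x - M y⟫_ℝ ≥ -lam * ‖x - y‖ ^ 2) :
    (∀ x y : X,
        ‖(x + (α - 1) • M x) - (y + (α - 1) • M y)‖ ≤
          Real.sqrt (1 + (1 - α) ^ 2 + 2 * lam * (1 - α)) * ‖x - y‖) ∧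
      Real.sqrt (1 + (1 - α) ^ 2 + 2 * lam * (1 - α)) < 2 - α := by
  set C : ℝ := 1 + (1 - α) ^ 2 + 2 * lam * (1 - α) with hC
  have hCnn : 0 ≤ C := by nlinarith [sq_nonneg (α - (1 + lam)*(1-α)), sq_nonneg (1 - α), sq_nonneg α, sq_nonneg (lam*(1-α))]
  constructor
  · intro x y
    have key : ‖(x + (α - 1) • M x) - (y + (α - 1) • M y)‖ ^ 2 ≤ C * ‖x - y‖ ^ 2 := by
      have heq : (x + (α - 1) • M x) - (y + (α - 1) • M y)
          = (x - y) + (α - 1) • (M x - M y) := by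
        rw [smul_sub]; abel
      rw [heq]
      have hnorm : ‖(x - y) + (α - 1) • (M x - M y)‖ ^ 2
          = ‖x - y‖ ^ 2 + 2 * ((α - 1) * ⟪x - y, M x - M y⟫_ℝ) + (α - 1) ^ 2 * ‖M x - M y‖ ^ 2 := by
        rw [@norm_add_sq_real, real_inner_smul_right, norm_smul]
        simp [Real.norm_eq_abs]
        ring_nf
        rw [sq_abs]
        ring
      rw [hnorm]
      have h1 := hM x y
      have h2 := hMne x y
      have h2' : ‖M x - M y‖ ^ 2 ≤ ‖x - y‖ ^ 2 := by
        have := norm_nonneg (M x - M y); nlinarith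
      have hα1' : α - 1 < 0 := by linarith
      nlinarith [norm_nonneg (x - y)]
    have h := Real.sqrt_le_sqrt key
    rw [Real.sqrt_sq (norm_nonneg _), Real.sqrt_mul hCnn, Real.sqrt_sq (norm_nonneg _)] at h
    exact h
  · have hlt : C < (2 - α) ^ 2 := by nlinarith
    have := Real.sqrt_lt_sqrt hCnn hlt
    rwa [Real.sqrt_sq (by linarith)] at this
end

section
/- Let R : X → X with −R α-averaged (α ∈ [0,1)), and M : X → X nonexpansive with ⟨x−y, Mx−My⟩ ≥ −λ‖x−y‖² for all x,y, λ ∈ [−1,1). Then T = (1/2)(Id + RM) is Lipschitz continuous with constant (1/2)(√(1 + (1−α)² + 2λ(1−α)) + α), which is strictly less than 1; hence T is a Banach contraction. -/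
open InnerProductSpace

theorem stmt_13 {X : Type*} [NormedAddCommGroup X] [InnerProductSpace ℝ X]
    (R M : X → X) (α lam : ℝ) (hα0 : 0 ≤ α) (hα1 : α < 1)
    (hlam0 : -1 ≤ lam) (hlam1 : lam < 1)
    (hR : ∃ N : X → X, (∀ x y : X, ‖N x - N y‖ ≤ ‖x - y‖) ∧
        ∀ x : X, -(R x) = (1 - α) • x + α • N x)
    (hMne : ∀ x y : X, ‖M x - M y‖ ≤ ‖x - y‖)
    (hM : ∀ x y : X, ⟪x - y, M x - M y⟫_ℝ ≥ -lam * ‖x - y‖ ^ 2)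
    (T : X → X) (hT : ∀ x : X, T x = (1 / 2 : ℝ) • (x + R (M x))) :
    (∀ x y : X,
        ‖T x - T y‖ ≤
          (1 / 2) * (Real.sqrt (1 + (1 - α) ^ 2 + 2 * lam * (1 - α)) + α) *
            ‖x - y‖) ∧
      (1 / 2) * (Real.sqrt (1 + (1 - α) ^ 2 + 2 * lam * (1 - α)) + α) < 1 := by
  obtain ⟨N, hNne, hNR⟩ := hR
  set s : ℝ := 1 + (1 - α) ^ 2 + 2 * lam * (1 - α) with hs
  have hs0 : 0 ≤ s := by nlinarith
  have hsqrt : 0 ≤ Real.sqrt s := Real.sqrt_nonneg s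
  constructor
  · intro x y
    have hRx : R (M x) = -((1 - α) • (M x) + α • N (M x)) := by
      rw [← hNR (M x), neg_neg]
    have hRy : R (M y) = -((1 - α) • (M y) + α • N (M y)) := by
      rw [← hNR (M y), neg_neg]
    have key : T x - T y =
        (1 / 2 : ℝ) • (((x - y) - (1 - α) • (M x - M y))
          + (-α) • (N (M x) - N (M y))) := by
      rw [hT x, hT y, hRx, hRy]
      module
    have hb : ‖M x - M y‖ ≤ ‖x - y‖ := hMne x y
    have hi : ⟪x - y, M x - M y⟫_ℝ ≥ -lam * ‖x - y‖ ^ 2 := hM x y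
    -- bound on ‖(x-y) - (1-α)(Mx-My)‖
    have hsq : ‖(x - y) - (1 - α) • (M x - M y)‖ ^ 2 ≤ s * ‖x - y‖ ^ 2 := by
      have hexp : ‖(x - y) - (1 - α) • (M x - M y)‖ ^ 2 =
          ‖x - y‖ ^ 2 - 2 * ((1 - α) * ⟪x - y, M x - M y⟫_ℝ)
            + (1 - α) ^ 2 * ‖M x - M y‖ ^ 2 := by
        rw [@norm_sub_sq_real, real_inner_smul_right, norm_smul]
        have : |1 - α| = 1 - α := abs_of_nonneg (by linarith)
        rw [Real.norm_eq_abs, this]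
        ring
      rw [hexp]
      have hb2 : ‖M x - M y‖ ^ 2 ≤ ‖x - y‖ ^ 2 :=
        pow_le_pow_left₀ (norm_nonneg _) hb 2
      have hβ : (0:ℝ) ≤ 1 - α := by linarith
      nlinarith [mul_le_mul_of_nonneg_left hb2 (sq_nonneg (1 - α)),
        mul_le_mul_of_nonneg_left hi hβ]
    have h1 : ‖(x - y) - (1 - α) • (M x - M y)‖ ≤ Real.sqrt s * ‖x - y‖ := by
      have := Real.sqrt_le_sqrt hsq
      rwa [Real.sqrt_sq (norm_nonneg _), Real.sqrt_mul hs0,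
        Real.sqrt_sq (norm_nonneg _)] at this
    have h2 : ‖(-α) • (N (M x) - N (M y))‖ ≤ α * ‖x - y‖ := by
      rw [norm_smul, Real.norm_eq_abs, abs_neg, abs_of_nonneg hα0]
      exact mul_le_mul_of_nonneg_left
        ((hNne (M x) (M y)).trans hb) hα0
    calc ‖T x - T y‖ = (1 / 2 : ℝ) * ‖((x - y) - (1 - α) • (M x - M y))
          + (-α) • (N (M x) - N (M y))‖ := by
          rw [key, norm_smul]; norm_num
      _ ≤ (1 / 2 : ℝ) * (‖(x - y) - (1 - α) • (M x - M y)‖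
          + ‖(-α) • (N (M x) - N (M y))‖) := by
          have := norm_add_le ((x - y) - (1 - α) • (M x - M y))
            ((-α) • (N (M x) - N (M y)))
          linarith
      _ ≤ (1 / 2) * (Real.sqrt s + α) * ‖x - y‖ := by nlinarith
  · have : Real.sqrt s < 2 - α := by
      rw [Real.sqrt_lt' (by linarith)]
      nlinarith
    linarith
end

section
/- Let R : X → X with −R α-averaged (α ∈ [0,1)), and let M : X → X be a nonexpansive linear operator with ⟨x−y, Mx−My⟩ ≥ −λ‖x−y‖² for all x,y, λ ∈ [−1,1). Then T̃ = (1/2)(Id + MR) is Lipschitz with constant (1/2)(√(1 + (1−α)² + 2λ(1−α)) + α) < 1, hence a Banach contraction with a unique fixed point. -/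
open InnerProductSpace

theorem stmt_14 {X : Type*} [NormedAddCommGroup X] [InnerProductSpace ℝ X]
    [CompleteSpace X]
    (R : X → X) (M : X →L[ℝ] X) (α lam : ℝ) (hα0 : 0 ≤ α) (hα1 : α < 1)
    (hlam0 : -1 ≤ lam) (hlam1 : lam < 1)
    (hR : ∃ N : X → X, (∀ x y : X, ‖N x - N y‖ ≤ ‖x - y‖) ∧
        ∀ x : X, -(R x) = (1 - α) • x + α • N x)
    (hMne : ‖M‖ ≤ 1)
    (hM : ∀ x y : X, ⟪x - y, M x - M y⟫_ℝ ≥ -lam * ‖x - y‖ ^ 2)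
    (T : X → X) (hT : ∀ x : X, T x = (1 / 2 : ℝ) • (x + M (R x))) :
    (∀ x y : X,
        ‖T x - T y‖ ≤
          (1 / 2) * (Real.sqrt (1 + (1 - α) ^ 2 + 2 * lam * (1 - α)) + α) *
            ‖x - y‖) ∧
      (1 / 2) * (Real.sqrt (1 + (1 - α) ^ 2 + 2 * lam * (1 - α)) + α) < 1 ∧
      (∃! x : X, T x = x) := by
  obtain ⟨N, hN, hRN⟩ := hR
  set s : ℝ := 1 + (1 - α) ^ 2 + 2 * lam * (1 - α) with hs
  have hαpos : 0 < 1 - α := by linarith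
  have hs_nonneg : 0 ≤ s := by nlinarith [sq_nonneg α]
  have hs_lt : s < (2 - α) ^ 2 := by nlinarith
  have hsqrt_lt : Real.sqrt s < 2 - α := by
    have h := Real.sqrt_lt_sqrt hs_nonneg hs_lt
    rwa [Real.sqrt_sq (by linarith)] at h
  have hsqrt_nonneg : 0 ≤ Real.sqrt s := Real.sqrt_nonneg s
  set c : ℝ := (1 / 2) * (Real.sqrt s + α) with hc
  have hc_lt : c < 1 := by rw [hc]; linarith
  have hc_nonneg : 0 ≤ c := by rw [hc]; positivity
  have key : ∀ x y : X, ‖T x - T y‖ ≤ c * ‖x - y‖ := by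
    intro x y
    have hMu : M x - M y = M (x - y) := (map_sub M x y).symm
    have hinner : ⟪x - y, M (x - y)⟫_ℝ ≥ -lam * ‖x - y‖ ^ 2 := by
      rw [← hMu]; exact hM x y
    have hMnorm : ‖M (x - y)‖ ≤ ‖x - y‖ := by
      calc ‖M (x - y)‖ ≤ ‖M‖ * ‖x - y‖ := M.le_opNorm _
        _ ≤ 1 * ‖x - y‖ := mul_le_mul_of_nonneg_right hMne (norm_nonneg _)
        _ = ‖x - y‖ := one_mul _
    have h1 : ‖(x - y) - (1 - α) • M (x - y)‖ ≤ Real.sqrt s * ‖x - y‖ := by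
      have hsq : ‖(x - y) - (1 - α) • M (x - y)‖ ^ 2 ≤ s * ‖x - y‖ ^ 2 := by
        have hexp := @norm_sub_sq_real X _ _ (x - y) ((1 - α) • M (x - y))
        rw [real_inner_smul_right, norm_smul, Real.norm_eq_abs,
          abs_of_pos hαpos] at hexp
        have hd1 : ‖M (x - y)‖ ^ 2 ≤ ‖x - y‖ ^ 2 :=
          pow_le_pow_left₀ (norm_nonneg _) hMnorm 2
        have hip : 0 ≤ lam * ‖x - y‖ ^ 2 + ⟪x - y, M (x - y)⟫_ℝ := by linarith
        nlinarith [mul_nonneg (sq_nonneg (1 - α)) (sub_nonneg.mpr hd1),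
          mul_nonneg hαpos.le hip]
      calc ‖(x - y) - (1 - α) • M (x - y)‖
          = Real.sqrt (‖(x - y) - (1 - α) • M (x - y)‖ ^ 2) :=
            (Real.sqrt_sq (norm_nonneg _)).symm
        _ ≤ Real.sqrt (s * ‖x - y‖ ^ 2) := Real.sqrt_le_sqrt hsq
        _ = Real.sqrt s * ‖x - y‖ := by
            rw [Real.sqrt_mul hs_nonneg, Real.sqrt_sq (norm_nonneg _)]
    have h2 : ‖M (N x - N y)‖ ≤ ‖x - y‖ := by
      calc ‖M (N x - N y)‖ ≤ ‖M‖ * ‖N x - N y‖ := M.le_opNorm _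
        _ ≤ 1 * ‖N x - N y‖ := mul_le_mul_of_nonneg_right hMne (norm_nonneg _)
        _ = ‖N x - N y‖ := one_mul _
        _ ≤ ‖x - y‖ := hN x y
    have hRx : ∀ z : X, R z = -((1 - α) • z + α • N z) := by
      intro z
      have h := hRN z
      linear_combination (norm := module) -h
    have hTxy : T x - T y =
        (1 / 2 : ℝ) • ((x - y) - (1 - α) • M (x - y)) -
          (α / 2 : ℝ) • M (N x - N y) := by
      rw [hT x, hT y, hRx x, hRx y]
      simp only [map_neg, map_add, map_smul, map_sub]
      module
    calc ‖T x - T y‖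
        ≤ ‖(1 / 2 : ℝ) • ((x - y) - (1 - α) • M (x - y))‖ +
            ‖(α / 2 : ℝ) • M (N x - N y)‖ := by
          rw [hTxy]; exact norm_sub_le _ _
      _ = (1 / 2) * ‖(x - y) - (1 - α) • M (x - y)‖ +
            (α / 2) * ‖M (N x - N y)‖ := by
          rw [norm_smul, norm_smul, Real.norm_eq_abs, Real.norm_eq_abs,
            abs_of_nonneg (by norm_num : (0:ℝ) ≤ 1 / 2),
            abs_of_nonneg (by linarith : (0:ℝ) ≤ α / 2)]
      _ ≤ (1 / 2) * (Real.sqrt s * ‖x - y‖) + (α / 2) * ‖x - y‖ := by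
          gcongr
      _ = c * ‖x - y‖ := by rw [hc]; ring
  refine ⟨key, hc_lt, ?_⟩
  have : Nonempty X := ⟨0⟩
  set K : NNReal := ⟨c, hc_nonneg⟩ with hK
  have hlip : LipschitzWith K T := by
    refine LipschitzWith.of_dist_le_mul fun x y => ?_
    rw [dist_eq_norm, dist_eq_norm]
    exact key x y
  have hcontr : ContractingWith K T := ⟨by exact_mod_cast hc_lt, hlip⟩
  refine ⟨hcontr.fixedPoint T, ?_, ?_⟩
  · exact hcontr.fixedPoint_isFixedPt
  · intro y hy
    have h := key y (hcontr.fixedPoint T)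
    rw [hy, hcontr.fixedPoint_isFixedPt] at h
    have hd : ‖y - hcontr.fixedPoint T‖ = 0 := by
      nlinarith [norm_nonneg (y - hcontr.fixedPoint T)]
    rw [← sub_eq_zero]
    exact norm_eq_zero.mp hd
end

section
/- Suppose A : X → X is linear, skew, and β-Lipschitz with β > 0. Then ⟨x, R_A x⟩ ≥ (2/(1+β²) − 1)‖x‖² for all x, where R_A = 2(Id+A)⁻¹ − Id. Equivalently, ⟨u + Au, u − Au⟩ ≥ (2/(1+β²) − 1)‖u + Au‖² for all u ∈ X. -/
/-!
Put `x = (1 + A)⁻¹ v`, so that `v = x + A x` and `R_A v = x - A x`. Skewness makes `x` and `A x`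
orthogonal, hence `⟪v, R_A v⟫ = ‖x‖² - ‖A x‖²` while `‖v‖² = ‖x‖² + ‖A x‖²`; the Lipschitz bound
`‖A x‖² ≤ β² ‖x‖²` then gives the ratio `(1 - β²) / (1 + β²) = 2 / (1 + β²) - 1`.
-/

open InnerProductSpace

theorem real_inner_add_sub_eq_norm_sq_sub_norm_sq {F : Type*} [NormedAddCommGroup F]
    [InnerProductSpace ℝ F] (x y : F) : ⟪x + y, x - y⟫_ℝ = ‖x‖ ^ 2 - ‖y‖ ^ 2 := by
  rw [inner_add_left, inner_sub_right, inner_sub_right, real_inner_comm x y,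
    real_inner_self_eq_norm_sq, real_inner_self_eq_norm_sq]
  ring

theorem real_inner_add_sub_ge_of_inner_eq_zero {F : Type*} [NormedAddCommGroup F]
    [InnerProductSpace ℝ F] {x y : F} {β : ℝ} (horth : ⟪x, y⟫_ℝ = 0) (hy : ‖y‖ ≤ β * ‖x‖) :
    ⟪x + y, x - y⟫_ℝ ≥ (2 / (1 + β ^ 2) - 1) * ‖x + y‖ ^ 2 := by
  have hy_sq : ‖y‖ ^ 2 ≤ β ^ 2 * ‖x‖ ^ 2 := by
    rw [← mul_pow]
    exact pow_le_pow_left₀ (norm_nonneg y) hy 2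
  have hpos : 0 < 1 + β ^ 2 := by positivity
  have hcoeff : 2 / (1 + β ^ 2) - 1 = (1 - β ^ 2) / (1 + β ^ 2) := by
    field_simp
    ring
  rw [real_inner_add_sub_eq_norm_sq_sub_norm_sq, norm_add_sq_real, horth, hcoeff, ge_iff_le,
    div_mul_eq_mul_div, div_le_iff₀ hpos]
  linarith

theorem stmt_18_general {X : Type*} [NormedAddCommGroup X] [InnerProductSpace ℝ X]
    (A : X →L[ℝ] X) (β : ℝ)
    (hskew : ∀ u : X, ⟪u, A u⟫_ℝ = 0)
    (hlip : ∀ u : X, ‖A u‖ ≤ β * ‖u‖) :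
    ∀ u : X, ⟪u + A u, u - A u⟫_ℝ ≥ (2 / (1 + β ^ 2) - 1) * ‖u + A u‖ ^ 2 :=
  fun u => real_inner_add_sub_ge_of_inner_eq_zero (hskew u) (hlip u)

theorem stmt_18 {X : Type*} [NormedAddCommGroup X] [InnerProductSpace ℝ X]
    (A : X →L[ℝ] X) (β : ℝ) (hβ : 0 < β)
    (hskew : ∀ u : X, ⟪u, A u⟫_ℝ = 0)
    (hlip : ∀ u : X, ‖A u‖ ≤ β * ‖u‖) :
    ∀ u : X, ⟪u + A u, u - A u⟫_ℝ ≥ (2 / (1 + β ^ 2) - 1) * ‖u + A u‖ ^ 2 :=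
  stmt_18_general A β hskew hlip
end

section
/- In X = ℝ², let A be the linear map with matrix β·[[0,1],[−1,0]] (β > 0) and let B = μ·Id + N_{{0}×ℝ} (μ > 0). Then the Douglas–Rachford operator T = (1/2)(Id + R_B R_A) is the linear map (1/(β²+1))·[[β², β],[β(1−μ)/(1+μ), (1+β²μ)/(1+μ)]], and its operator norm equals (1/(2(1+μ)))·(√(2μ² + 2μ + 1 + 2(1 − 2/(1+β²))μ(1+μ)) + 1), which is strictly less than 1. -/
/-!
For a real 2×2 matrix `M = !![a, b; c, d]` put `p = ‖(a + d, b - c)‖` and `q = ‖(a - d, b + c)‖`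
(twice the norms of the conformal and anticonformal parts of `M`). Then `‖M‖ ≤ N` iff
`N² - MᵀM` is positive semidefinite, i.e. iff its trace `2N² - (p² + q²)/2` and its determinant
`(N² - ((p + q)/2)²)(N² - ((p - q)/2)²)` are nonnegative, so `‖M‖ = (p + q)/2`.
For the Douglas–Rachford matrix `p = √D/(1 + μ)` and `q = 1/(1 + μ)`, and
`D = (2μ + 1)² - 4μ(1 + μ)/(1 + β²) < (2μ + 1)²` gives the contraction.
-/

open Matrix

theorem forall_quadratic_form_nonneg_iff (A B C : ℝ) :
    (∀ x y : ℝ, 0 ≤ A * x ^ 2 + 2 * B * x * y + C * y ^ 2) ↔ 0 ≤ A + C ∧ B ^ 2 ≤ A * C := by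
  constructor
  · intro h
    have hA : 0 ≤ A := by simpa using h 1 0
    have hC : 0 ≤ C := by simpa using h 0 1
    refine ⟨add_nonneg hA hC, ?_⟩
    by_contra! hlt
    have hAB : 0 ≤ A * (A * C - B ^ 2) := by nlinarith [h B (-A)]
    have hCB : 0 ≤ C * (A * C - B ^ 2) := by nlinarith [h C (-B)]
    have hA0 : A = 0 := by nlinarith
    have hC0 : C = 0 := by nlinarith
    nlinarith [h 1 (-B)]
  · rintro ⟨hAC, hdisc⟩ x y
    rcases hAC.eq_or_lt with hAC | hAC
    · have hA : A = 0 := by nlinarith [sq_nonneg A, sq_nonneg B]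
      have hB : B = 0 := by nlinarith [sq_nonneg B]
      have hC : C = 0 := by linarith
      simp [hA, hB, hC]
    · -- `(A + C) Q = (A x + B y)² + (B x + C y)² + (A C - B²)(x² + y²)`
      refine nonneg_of_mul_nonneg_right ?_ hAC
      nlinarith [sq_nonneg (A * x + B * y), sq_nonneg (B * x + C * y),
        mul_nonneg (sub_nonneg.2 hdisc) (add_nonneg (sq_nonneg x) (sq_nonneg y))]

theorem half_add_le_iff {p q N : ℝ} (hp : 0 ≤ p) (hq : 0 ≤ q) (hN : 0 ≤ N) :
    (p + q) / 2 ≤ N ↔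
      (p ^ 2 + q ^ 2) / 2 ≤ 2 * N ^ 2 ∧
        0 ≤ N ^ 4 - (p ^ 2 + q ^ 2) / 2 * N ^ 2 + ((p ^ 2 - q ^ 2) / 4) ^ 2 := by
  have hfactor : N ^ 4 - (p ^ 2 + q ^ 2) / 2 * N ^ 2 + ((p ^ 2 - q ^ 2) / 4) ^ 2 =
      (N ^ 2 - ((p + q) / 2) ^ 2) * (N ^ 2 - ((p - q) / 2) ^ 2) := by ring
  rw [hfactor]
  constructor
  · intro h
    have hsq : ((p + q) / 2) ^ 2 ≤ N ^ 2 := pow_le_pow_left₀ (by positivity) h 2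
    exact ⟨by nlinarith [mul_nonneg hp hq],
      mul_nonneg (by linarith) (by nlinarith [mul_nonneg hp hq])⟩
  · rintro ⟨htrace, hdet⟩
    by_contra! hlt
    have hsq : N ^ 2 < ((p + q) / 2) ^ 2 := pow_lt_pow_left₀ hlt hN two_ne_zero
    have hsmall : N ^ 2 ≤ ((p - q) / 2) ^ 2 := by nlinarith
    nlinarith [mul_nonneg hp hq]

namespace Matrix

theorem norm_toEuclideanCLM_fin_two_apply_sq (M : Matrix (Fin 2) (Fin 2) ℝ)
    (x : EuclideanSpace ℝ (Fin 2)) :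
    ‖toEuclideanCLM (𝕜 := ℝ) M x‖ ^ 2 =
      (M 0 0 * x 0 + M 0 1 * x 1) ^ 2 + (M 1 0 * x 0 + M 1 1 * x 1) ^ 2 := by
  rw [EuclideanSpace.real_norm_sq_eq, Fin.sum_univ_two, ofLp_toEuclideanCLM]
  simp [mulVec, dotProduct, Fin.sum_univ_two]

theorem norm_toEuclideanCLM_fin_two_le_iff (M : Matrix (Fin 2) (Fin 2) ℝ) {N : ℝ} (hN : 0 ≤ N) :
    ‖toEuclideanCLM (𝕜 := ℝ) M‖ ≤ N ↔
      M 0 0 ^ 2 + M 0 1 ^ 2 + M 1 0 ^ 2 + M 1 1 ^ 2 ≤ 2 * N ^ 2 ∧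
        0 ≤ N ^ 4 - (M 0 0 ^ 2 + M 0 1 ^ 2 + M 1 0 ^ 2 + M 1 1 ^ 2) * N ^ 2 + M.det ^ 2 := by
  have hpoint (x : EuclideanSpace ℝ (Fin 2)) :
      ‖toEuclideanCLM (𝕜 := ℝ) M x‖ ≤ N * ‖x‖ ↔
        0 ≤ (N ^ 2 - M 0 0 ^ 2 - M 1 0 ^ 2) * x 0 ^ 2
          + 2 * -(M 0 0 * M 0 1 + M 1 0 * M 1 1) * x 0 * x 1
          + (N ^ 2 - M 0 1 ^ 2 - M 1 1 ^ 2) * x 1 ^ 2 := by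
    rw [← pow_le_pow_iff_left₀ (norm_nonneg _) (by positivity) two_ne_zero, mul_pow,
      norm_toEuclideanCLM_fin_two_apply_sq, EuclideanSpace.real_norm_sq_eq, Fin.sum_univ_two,
      ← sub_nonneg]
    constructor <;> intro h <;> linarith
  rw [ContinuousLinearMap.opNorm_le_iff hN, forall_congr' hpoint, det_fin_two]
  trans ∀ x y : ℝ, 0 ≤ (N ^ 2 - M 0 0 ^ 2 - M 1 0 ^ 2) * x ^ 2
      + 2 * -(M 0 0 * M 0 1 + M 1 0 * M 1 1) * x * y + (N ^ 2 - M 0 1 ^ 2 - M 1 1 ^ 2) * y ^ 2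
  · exact ⟨fun h x y ↦ by simpa using h !₂[x, y], fun h x ↦ h (x 0) (x 1)⟩
  -- the determinant condition is Lagrange's identity `(a² + c²)(b² + d²) - (ab + cd)² = (ad - bc)²`
  rw [forall_quadratic_form_nonneg_iff]
  constructor <;> rintro ⟨h₁, h₂⟩ <;> constructor <;> linarith

theorem norm_toEuclideanCLM_fin_two (M : Matrix (Fin 2) (Fin 2) ℝ) :
    ‖toEuclideanCLM (𝕜 := ℝ) M‖ =
      (√((M 0 0 + M 1 1) ^ 2 + (M 0 1 - M 1 0) ^ 2) +
        √((M 0 0 - M 1 1) ^ 2 + (M 0 1 + M 1 0) ^ 2)) / 2 := by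
  set p := √((M 0 0 + M 1 1) ^ 2 + (M 0 1 - M 1 0) ^ 2)
  set q := √((M 0 0 - M 1 1) ^ 2 + (M 0 1 + M 1 0) ^ 2)
  have hp : p ^ 2 = (M 0 0 + M 1 1) ^ 2 + (M 0 1 - M 1 0) ^ 2 := Real.sq_sqrt (by positivity)
  have hq : q ^ 2 = (M 0 0 - M 1 1) ^ 2 + (M 0 1 + M 1 0) ^ 2 := Real.sq_sqrt (by positivity)
  have hle {N : ℝ} (hN : 0 ≤ N) : ‖toEuclideanCLM (𝕜 := ℝ) M‖ ≤ N ↔ (p + q) / 2 ≤ N := by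
    rw [norm_toEuclideanCLM_fin_two_le_iff M hN,
      half_add_le_iff (Real.sqrt_nonneg _) (Real.sqrt_nonneg _) hN, hp, hq, det_fin_two]
    constructor <;> rintro ⟨h₁, h₂⟩ <;> constructor <;> linarith
  exact le_antisymm ((hle (by positivity)).2 le_rfl) ((hle (norm_nonneg _)).1 le_rfl)

theorem inv_one_add_smul_skew_fin_two (β : ℝ) :
    (1 + β • !![0, 1; -1, 0])⁻¹ = (1 / (β ^ 2 + 1)) • !![1, -β; β, 1] := by
  apply inv_eq_right_inv
  have : β ^ 2 + 1 ≠ 0 := by positivity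
  ext i j
  fin_cases i <;> fin_cases j <;> simp [mul_apply, Fin.sum_univ_two, one_apply] <;>
    field_simp <;> ring

theorem two_smul_inv_one_add_smul_skew_fin_two_sub_one (β : ℝ) :
    2 • (1 + β • !![0, 1; -1, 0])⁻¹ - 1 =
      (1 / (β ^ 2 + 1)) • !![1 - β ^ 2, -(2 * β); 2 * β, 1 - β ^ 2] := by
  rw [inv_one_add_smul_skew_fin_two]
  have : β ^ 2 + 1 ≠ 0 := by positivity
  ext i j
  fin_cases i <;> fin_cases j <;> simp <;> field_simp <;> ring

end Matrix

theorem douglasRachford_matrix_eq (β μ : ℝ) (hμ : 1 + μ ≠ 0) :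
    (1 / 2 : ℝ) • (1 + !![-1, 0; 0, (1 - μ) / (1 + μ)] * (2 • (1 + β • !![0, 1; -1, 0])⁻¹ - 1)) =
      (1 / (β ^ 2 + 1)) •
        !![β ^ 2, β; β * (1 - μ) / (1 + μ), (1 + β ^ 2 * μ) / (1 + μ)] := by
  rw [two_smul_inv_one_add_smul_skew_fin_two_sub_one]
  have : β ^ 2 + 1 ≠ 0 := by positivity
  ext i j
  fin_cases i <;> fin_cases j <;> simp [one_apply] <;> field_simp <;> ring

theorem norm_douglasRachford_matrix (β μ : ℝ) (hμ : 0 ≤ μ) :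
    ‖toEuclideanCLM (n := Fin 2) (𝕜 := ℝ) ((1 / (β ^ 2 + 1)) •
        !![β ^ 2, β; β * (1 - μ) / (1 + μ), (1 + β ^ 2 * μ) / (1 + μ)])‖ =
      (1 / (2 * (1 + μ))) *
        (√(2 * μ ^ 2 + 2 * μ + 1 + 2 * (1 - 2 / (1 + β ^ 2)) * μ * (1 + μ)) + 1) := by
  set D := 2 * μ ^ 2 + 2 * μ + 1 + 2 * (1 - 2 / (1 + β ^ 2)) * μ * (1 + μ)
  have hβ : 1 + β ^ 2 ≠ 0 := by positivity
  have hμ' : 0 < 1 + μ := by linarith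
  have hD : 0 ≤ D := by
    have : D = 1 + 4 * μ * (1 + μ) * β ^ 2 / (1 + β ^ 2) := by simp only [D]; field_simp; ring
    rw [this]; positivity
  have hsum : ((1 / (β ^ 2 + 1)) * β ^ 2 + (1 / (β ^ 2 + 1)) * ((1 + β ^ 2 * μ) / (1 + μ))) ^ 2
      + ((1 / (β ^ 2 + 1)) * β - (1 / (β ^ 2 + 1)) * (β * (1 - μ) / (1 + μ))) ^ 2
      = (√D / (1 + μ)) ^ 2 := by
    rw [div_pow, Real.sq_sqrt hD]; simp only [D]; field_simp; ring
  have hdiff : ((1 / (β ^ 2 + 1)) * β ^ 2 - (1 / (β ^ 2 + 1)) * ((1 + β ^ 2 * μ) / (1 + μ))) ^ 2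
      + ((1 / (β ^ 2 + 1)) * β + (1 / (β ^ 2 + 1)) * (β * (1 - μ) / (1 + μ))) ^ 2
      = (1 / (1 + μ)) ^ 2 := by
    field_simp; ring
  rw [norm_toEuclideanCLM_fin_two]
  simp only [Matrix.smul_apply, of_apply, cons_val', cons_val_zero, cons_val_one, empty_val',
    cons_val_fin_one, smul_eq_mul]
  rw [hsum, hdiff, Real.sqrt_sq (by positivity), Real.sqrt_sq (by positivity)]
  field_simp

theorem douglasRachford_rate_lt_one (β μ : ℝ) (hμ : 0 < μ) :
    (1 / (2 * (1 + μ))) *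
      (√(2 * μ ^ 2 + 2 * μ + 1 + 2 * (1 - 2 / (1 + β ^ 2)) * μ * (1 + μ)) + 1) < 1 := by
  have hgap : 2 * μ ^ 2 + 2 * μ + 1 + 2 * (1 - 2 / (1 + β ^ 2)) * μ * (1 + μ) =
      (2 * μ + 1) ^ 2 - 4 * μ * (1 + μ) / (1 + β ^ 2) := by
    field_simp; ring
  have hsqrt :
      √(2 * μ ^ 2 + 2 * μ + 1 + 2 * (1 - 2 / (1 + β ^ 2)) * μ * (1 + μ)) < 2 * μ + 1 := by
    rw [Real.sqrt_lt' (by positivity), hgap]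
    have : 0 < 4 * μ * (1 + μ) / (1 + β ^ 2) := by positivity
    linarith
  rw [one_div_mul_eq_div, div_lt_one (by positivity)]
  linarith

theorem stmt_19_general (β μ : ℝ) (hμ : 0 < μ)
    (MA RA RB T : Matrix (Fin 2) (Fin 2) ℝ)
    (hMA : MA = β • !![0, 1; -1, 0])
    (hRA : RA = 2 • (1 + MA)⁻¹ - 1)
    (hRB : RB = !![-1, 0; 0, (1 - μ) / (1 + μ)])
    (hT : T = (1 / 2 : ℝ) • (1 + RB * RA)) :
    T = (1 / (β ^ 2 + 1)) •
        !![β ^ 2, β; β * (1 - μ) / (1 + μ), (1 + β ^ 2 * μ) / (1 + μ)] ∧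
      ‖Matrix.toEuclideanCLM (𝕜 := ℝ) T‖ =
        (1 / (2 * (1 + μ))) *
          (Real.sqrt (2 * μ ^ 2 + 2 * μ + 1 +
              2 * (1 - 2 / (1 + β ^ 2)) * μ * (1 + μ)) + 1) ∧
      (1 / (2 * (1 + μ))) *
          (Real.sqrt (2 * μ ^ 2 + 2 * μ + 1 +
              2 * (1 - 2 / (1 + β ^ 2)) * μ * (1 + μ)) + 1) < 1 := by
  subst hMA hRA hRB
  have hT_eq := hT.trans (douglasRachford_matrix_eq β μ (by positivity))
  exact ⟨hT_eq, by rw [hT_eq, norm_douglasRachford_matrix β μ hμ.le],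
    douglasRachford_rate_lt_one β μ hμ⟩

theorem stmt_19 (β μ : ℝ) (hβ : 0 < β) (hμ : 0 < μ)
    (MA RA RB T : Matrix (Fin 2) (Fin 2) ℝ)
    (hMA : MA = β • !![0, 1; -1, 0])
    (hRA : RA = 2 • (1 + MA)⁻¹ - 1)
    (hRB : RB = !![-1, 0; 0, (1 - μ) / (1 + μ)])
    (hT : T = (1 / 2 : ℝ) • (1 + RB * RA)) :
    T = (1 / (β ^ 2 + 1)) •
        !![β ^ 2, β; β * (1 - μ) / (1 + μ), (1 + β ^ 2 * μ) / (1 + μ)] ∧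
      ‖Matrix.toEuclideanCLM (𝕜 := ℝ) T‖ =
        (1 / (2 * (1 + μ))) *
          (Real.sqrt (2 * μ ^ 2 + 2 * μ + 1 +
              2 * (1 - 2 / (1 + β ^ 2)) * μ * (1 + μ)) + 1) ∧
      (1 / (2 * (1 + μ))) *
          (Real.sqrt (2 * μ ^ 2 + 2 * μ + 1 +
              2 * (1 - 2 / (1 + β ^ 2)) * μ * (1 + μ)) + 1) < 1 :=
  stmt_19_general β μ hμ MA RA RB T hMA hRA hRB hT
end
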